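/- arXiv:math/0402294 — 3 statements merged into one kernel-verified Lean document; each statement's English description precedes it below -/
import Mathlib

section
/- For any permutation σ of {1,…,2n} and either fixed row index i ∈ {1,2}, one has E*(E_{i σ(1)}, E_{i σ(2)}, …, E_{i σ(2n)}) = sgn(σ) · (2n)!. -/
/-- `Ω* k l (X, Y) = ∑_{i=1}^{2} (X_{ik} Y_{il} − X_{il} Y_{ik})`. -/
noncomputable def Omst (n : ℕ) (k l : Fin (2 * n)) (X Y : Fin 2 → Fin (2 * n) → ℝ) : ℝ :=
  ∑ i : Fin 2, (X i k * Y i l - X i l * Y i k)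

/-- `E*(v₁,…,v_{2n}) = ∑_σ sgn σ (Ω*_{σ(1)σ(2)} ∧ ⋯ ∧ Ω*_{σ(2n−1)σ(2n)})(v₁,…,v_{2n})`. -/
noncomputable def Estar (n : ℕ) (v : Fin (2 * n) → (Fin 2 → Fin (2 * n) → ℝ)) : ℝ :=
  ∑ σ : Equiv.Perm (Fin (2 * n)), ((Equiv.Perm.sign σ : ℤ) : ℝ) *
    ((1 / 2 ^ n : ℝ) * ∑ τ : Equiv.Perm (Fin (2 * n)), ((Equiv.Perm.sign τ : ℤ) : ℝ) *
      ∏ j : Fin n,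
        Omst n (σ ⟨2 * j.1, by have := j.isLt; omega⟩) (σ ⟨2 * j.1 + 1, by have := j.isLt; omega⟩)
          (v (τ ⟨2 * j.1, by have := j.isLt; omega⟩)) (v (τ ⟨2 * j.1 + 1, by have := j.isLt; omega⟩)))


/-- standard basis matrix `E i k`. -/
noncomputable def Emat (n : ℕ) (i : Fin 2) (k : Fin (2 * n)) : Fin 2 → Fin (2 * n) → ℝ :=
  fun a b => if a = i ∧ b = k then 1 else 0

/-!
On basis vectors of one row, `Ω*_{kl}(E_{ia}, E_{ib})` is the alternating delta `δ^{kl}_{ab}`,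
so relabelling by the injection `στ` makes the `(ρ, τ)` term of `E*` depend only on
`π = (στ)⁻¹ρ`. Substituting `ρ = στπ` turns the sum over `ρ` into
`sgn σ · sgn τ · ∑_π sgn π · P(π)` with `P(π) = ∏_j δ^{π(2j) π(2j+1)}_{2j, 2j+1}`. Now `P(π)`
vanishes unless `π` preserves every pair `{2j, 2j+1}`, and for such `π` it equals
`(-1)^(number of swapped pairs) = sgn π`; hence `∑_π sgn π · P(π) = 2^n`, which cancels the
normalisation `1 / 2^n` and leaves `(2n)!` equal contributions `sgn σ`.
-/

open Finset Equiv Function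

section AltDelta

variable {α β : Type*} [DecidableEq α] [DecidableEq β]

def altDelta (k l a b : α) : ℝ :=
  (if k = a ∧ l = b then 1 else 0) - (if k = b ∧ l = a then 1 else 0)

lemma altDelta_map {f : α → β} (hf : Injective f) (k l a b : α) :
    altDelta (f k) (f l) (f a) (f b) = altDelta k l a b := by
  simp only [altDelta, hf.eq_iff]

end AltDelta

lemma omst_emat (n : ℕ) (i : Fin 2) (k l a b : Fin (2 * n)) :
    Omst n k l (Emat n i a) (Emat n i b) = altDelta k l a b := by
  fin_cases i <;> by_cases k = a <;> simp [Omst, Emat, altDelta, ite_and, *]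

namespace EulerForm

variable {n : ℕ}

def evenIdx (j : Fin n) : Fin (2 * n) := ⟨2 * j, by omega⟩

def oddIdx (j : Fin n) : Fin (2 * n) := ⟨2 * j + 1, by omega⟩

@[simp] lemma evenIdx_inj {j k : Fin n} : evenIdx j = evenIdx k ↔ j = k := by
  simp [evenIdx, Fin.ext_iff]

@[simp] lemma oddIdx_inj {j k : Fin n} : oddIdx j = oddIdx k ↔ j = k := by
  simp [oddIdx, Fin.ext_iff]

@[simp] lemma evenIdx_ne_oddIdx (j k : Fin n) : evenIdx j ≠ oddIdx k := by
  simp [evenIdx, oddIdx, Fin.ext_iff]; omega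

@[simp] lemma oddIdx_ne_evenIdx (j k : Fin n) : oddIdx j ≠ evenIdx k :=
  (evenIdx_ne_oddIdx k j).symm

lemma exists_eq_evenIdx_or_oddIdx (x : Fin (2 * n)) : ∃ j, x = evenIdx j ∨ x = oddIdx j :=
  ⟨⟨x / 2, by omega⟩, by simp only [evenIdx, oddIdx, Fin.ext_iff]; omega⟩

lemma perm_ext_pairs {π π' : Perm (Fin (2 * n))}
    (h : ∀ j, π (evenIdx j) = π' (evenIdx j) ∧ π (oddIdx j) = π' (oddIdx j)) :
    π = π' := by
  ext1 x
  obtain ⟨j, rfl | rfl⟩ := exists_eq_evenIdx_or_oddIdx x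
  exacts [(h j).1, (h j).2]

def pairSwap (j : Fin n) : Perm (Fin (2 * n)) := swap (evenIdx j) (oddIdx j)

lemma pairSwap_apply_evenIdx (a j : Fin n) :
    pairSwap a (evenIdx j) = if j = a then oddIdx j else evenIdx j := by
  by_cases h : j = a <;> simp [pairSwap, swap_apply_def, h]

lemma pairSwap_apply_oddIdx (a j : Fin n) :
    pairSwap a (oddIdx j) = if j = a then evenIdx j else oddIdx j := by
  by_cases h : j = a <;> simp [pairSwap, swap_apply_def, h]

lemma pairwise_commute_pairSwap : Pairwise (Commute on (pairSwap (n := n))) := by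
  intro a b hab
  refine Perm.Disjoint.commute fun x => ?_
  obtain ⟨j, rfl | rfl⟩ := exists_eq_evenIdx_or_oddIdx x <;>
    by_cases hja : j = a <;> simp [pairSwap_apply_evenIdx, pairSwap_apply_oddIdx, hja, hab]

def swapPairs (t : Finset (Fin n)) : Perm (Fin (2 * n)) :=
  t.noncommProd pairSwap (pairwise_commute_pairSwap.set_pairwise _)

lemma swapPairs_insert {a : Fin n} {t : Finset (Fin n)} (ha : a ∉ t) :
    swapPairs (insert a t) = pairSwap a * swapPairs t :=
  noncommProd_insert_of_notMem _ _ _ _ ha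

lemma swapPairs_apply_evenIdx (t : Finset (Fin n)) (j : Fin n) :
    swapPairs t (evenIdx j) = if j ∈ t then oddIdx j else evenIdx j := by
  induction t using Finset.induction_on with
  | empty => simp [swapPairs]
  | insert a s ha ih =>
    rw [swapPairs_insert ha, Perm.mul_apply, ih]
    by_cases hja : j = a
    · subst hja; simp [ha, pairSwap_apply_evenIdx]
    · split_ifs <;> simp_all [pairSwap_apply_evenIdx, pairSwap_apply_oddIdx]

lemma swapPairs_apply_oddIdx (t : Finset (Fin n)) (j : Fin n) :
    swapPairs t (oddIdx j) = if j ∈ t then evenIdx j else oddIdx j := by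
  induction t using Finset.induction_on with
  | empty => simp [swapPairs]
  | insert a s ha ih =>
    rw [swapPairs_insert ha, Perm.mul_apply, ih]
    by_cases hja : j = a
    · subst hja; simp [ha, pairSwap_apply_oddIdx]
    · split_ifs <;> simp_all [pairSwap_apply_evenIdx, pairSwap_apply_oddIdx]

lemma sign_swapPairs (t : Finset (Fin n)) : Perm.sign (swapPairs t) = (-1) ^ #t := by
  induction t using Finset.induction_on with
  | empty => simp [swapPairs]
  | insert a s ha ih =>
    rw [swapPairs_insert ha, map_mul, ih, pairSwap, Perm.sign_swap (evenIdx_ne_oddIdx a a),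
      card_insert_of_notMem ha, pow_succ']

def pairProd (π : Perm (Fin (2 * n))) : ℝ :=
  ∏ j, altDelta (π (evenIdx j)) (π (oddIdx j)) (evenIdx j) (oddIdx j)

lemma prod_sdiff_mul_prod_eq_ite (π : Perm (Fin (2 * n))) (t : Finset (Fin n)) :
    (∏ j ∈ univ \ t,
        if π (evenIdx j) = evenIdx j ∧ π (oddIdx j) = oddIdx j then (1 : ℝ) else 0) *
      ∏ j ∈ t, (if π (evenIdx j) = oddIdx j ∧ π (oddIdx j) = evenIdx j then 1 else 0) =
      if π = swapPairs t then 1 else 0 := by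
  rw [mul_comm, ← compl_eq_univ_sdiff]
  calc _ = ∏ j, if π (evenIdx j) = swapPairs t (evenIdx j) ∧
          π (oddIdx j) = swapPairs t (oddIdx j) then (1 : ℝ) else 0 := by
        rw [← prod_mul_prod_compl t]
        congr 1 <;> refine prod_congr rfl fun j hj => ?_ <;>
          simp_all [swapPairs_apply_evenIdx, swapPairs_apply_oddIdx]
    _ = _ := by
      rw [Fintype.prod_boole]
      congr 1
      exact propext ⟨perm_ext_pairs, fun h j => by simp [h]⟩

lemma pairProd_eq_sum (π : Perm (Fin (2 * n))) :
    pairProd π = ∑ t ∈ univ.powerset, (-1) ^ #t * if π = swapPairs t then 1 else 0 := by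
  simp only [pairProd, altDelta, prod_sub, mul_assoc, prod_sdiff_mul_prod_eq_ite]

lemma sum_sign_mul_pairProd :
    ∑ π : Perm (Fin (2 * n)), (Perm.sign π : ℝ) * pairProd π = 2 ^ n := by
  simp_rw [pairProd_eq_sum, mul_sum]
  rw [sum_comm]
  simp [sign_swapPairs, ← mul_pow]

lemma sum_sign_mul_prod_altDelta (g : Perm (Fin (2 * n))) :
    ∑ ρ : Perm (Fin (2 * n)), (Perm.sign ρ : ℝ) *
        ∏ j, altDelta (ρ (evenIdx j)) (ρ (oddIdx j)) (g (evenIdx j)) (g (oddIdx j)) =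
      Perm.sign g * 2 ^ n := by
  rw [← Equiv.sum_comp (Equiv.mulLeft g)]
  simp only [coe_mulLeft, Perm.mul_apply, altDelta_map g.injective, map_mul, Units.val_mul,
    Int.cast_mul, mul_assoc, ← mul_sum]
  rw [← sum_sign_mul_pairProd]
  rfl

lemma estar_eq (v : Fin (2 * n) → Fin 2 → Fin (2 * n) → ℝ) :
    Estar n v = ∑ ρ : Perm (Fin (2 * n)), (Perm.sign ρ : ℝ) * (1 / 2 ^ n *
      ∑ τ : Perm (Fin (2 * n)), (Perm.sign τ : ℝ) *
        ∏ j, Omst n (ρ (evenIdx j)) (ρ (oddIdx j)) (v (τ (evenIdx j))) (v (τ (oddIdx j)))) :=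
  rfl

end EulerForm

open EulerForm

theorem stmt_9_general (n : ℕ) (σ : Equiv.Perm (Fin (2 * n))) (i : Fin 2) :
    Estar n (fun a => Emat n i (σ a)) =
      ((Equiv.Perm.sign σ : ℤ) : ℝ) * (Nat.factorial (2 * n) : ℝ) := by
  have inner_sum (τ : Perm (Fin (2 * n))) :
      (Perm.sign τ : ℝ) * ∑ ρ : Perm (Fin (2 * n)), (Perm.sign ρ : ℝ) *
        ∏ j, Omst n (ρ (evenIdx j)) (ρ (oddIdx j))
          (Emat n i (σ (τ (evenIdx j)))) (Emat n i (σ (τ (oddIdx j)))) =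
      Perm.sign σ * 2 ^ n := by
    simp only [omst_emat, ← Perm.mul_apply σ τ, sum_sign_mul_prod_altDelta, map_mul]
    rcases Int.units_eq_one_or (Perm.sign τ) with h | h <;> simp [h]
  calc Estar n (fun a => Emat n i (σ a))
      = 1 / 2 ^ n * ∑ τ : Perm (Fin (2 * n)), (Perm.sign τ : ℝ) * ∑ ρ : Perm (Fin (2 * n)),
          (Perm.sign ρ : ℝ) * ∏ j, Omst n (ρ (evenIdx j)) (ρ (oddIdx j))
            (Emat n i (σ (τ (evenIdx j)))) (Emat n i (σ (τ (oddIdx j)))) := by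
        simp only [estar_eq, mul_sum]
        rw [sum_comm]
        refine sum_congr rfl fun τ _ => sum_congr rfl fun ρ _ => ?_
        ring
    _ = _ := by
      simp only [inner_sum, sum_const, card_univ, Fintype.card_perm, Fintype.card_fin, nsmul_eq_mul]
      field_simp

theorem stmt_9 (n : ℕ) (hn : 1 ≤ n) (σ : Equiv.Perm (Fin (2 * n))) (i : Fin 2) :
    Estar n (fun a => Emat n i (σ a)) =
      ((Equiv.Perm.sign σ : ℤ) : ℝ) * (Nat.factorial (2 * n) : ℝ) :=
  stmt_9_general n σ i
end

section
/- Let i₁, …, i_{2n} ∈ {1,2} and k₁, …, k_{2n} ∈ {1,…,2n}. If the multiset {k₁,…,k_{2n}} is not equal to {1,…,2n}, or if the number of indices j with i_j = 1 is odd (equivalently, the i's cannot be partitioned into n pairs of equal values), then E*(E_{i₁ k₁}, E_{i₂ k₂}, …, E_{i_{2n} k_{2n}}) = 0. -/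
open Finset Function

lemma Finset.univ_val_map_eq_of_surjective {α : Type*} [Fintype α] {f : α → α}
    (hf : Surjective f) : univ.val.map f = univ.val :=
  Multiset.map_univ_val_equiv (Equiv.ofBijective f (Finite.surjective_iff_bijective.mp hf))

lemma even_card_filter_of_iff_pair {β : Type*} [Fintype β] {n : ℕ} (e : Fin n × Fin 2 ≃ β)
    (p : β → Prop) [DecidablePred p] (hp : ∀ j, p (e (j, 0)) ↔ p (e (j, 1))) :
    Even #{x | p x} := by
  rw [card_filter, ← e.sum_comp, Fintype.sum_prod_type]
  refine even_sum _ fun j _ => ?_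
  simp only [Fin.sum_univ_two, hp j, ← two_mul, even_two_mul]

/-- `(j, b) ↦ 2j + b`; `pairEquiv n (j, 0)` and `pairEquiv n (j, 1)` unfold to the indices
`⟨2 * j, _⟩` and `⟨2 * j + 1, _⟩` of the `j`-th pair of arguments in `Estar`. -/
def pairEquiv (n : ℕ) : Fin n × Fin 2 ≃ Fin (2 * n) where
  toFun p := ⟨2 * p.1 + p.2, by omega⟩
  invFun m := (⟨m / 2, by omega⟩, ⟨m % 2, by omega⟩)
  left_inv p := by ext <;> simp <;> omega
  right_inv m := by ext; simp; omega

lemma Omst_Emat {n : ℕ} (a b : Fin (2 * n)) (i₁ i₂ : Fin 2) (k₁ k₂ : Fin (2 * n)) :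
    Omst n a b (Emat n i₁ k₁) (Emat n i₂ k₂) =
      if i₁ = i₂ then (if k₁ = a ∧ k₂ = b then 1 else 0) - (if k₁ = b ∧ k₂ = a then 1 else 0)
      else 0 := by
  simp only [Omst, Emat, Fin.sum_univ_two]
  grind

lemma eq_and_of_Omst_Emat_ne_zero {n : ℕ} {a b : Fin (2 * n)} {i₁ i₂ : Fin 2}
    {k₁ k₂ : Fin (2 * n)} (h : Omst n a b (Emat n i₁ k₁) (Emat n i₂ k₂) ≠ 0) :
    i₁ = i₂ ∧ (k₁ = a ∧ k₂ = b ∨ k₁ = b ∧ k₂ = a) := by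
  rw [Omst_Emat] at h
  grind

lemma prod_Omst_Emat_eq_zero {n : ℕ} {i : Fin (2 * n) → Fin 2} {k : Fin (2 * n) → Fin (2 * n)}
    (h : ¬ Surjective k ∨ Odd #{j | i j = 0}) (σ τ : Equiv.Perm (Fin (2 * n))) :
    ∏ j : Fin n, Omst n (σ (pairEquiv n (j, 0))) (σ (pairEquiv n (j, 1)))
      (Emat n (i (τ (pairEquiv n (j, 0)))) (k (τ (pairEquiv n (j, 0)))))
      (Emat n (i (τ (pairEquiv n (j, 1)))) (k (τ (pairEquiv n (j, 1))))) = 0 := by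
  by_contra hne
  have hpair j := eq_and_of_Omst_Emat_ne_zero (prod_ne_zero_iff.mp hne j (mem_univ j))
  rcases h with hk | hi
  · refine hk fun c => ?_
    obtain ⟨⟨j, b⟩, rfl⟩ := ((pairEquiv n).trans σ).surjective c
    fin_cases b <;> rcases (hpair j).2 with ⟨h₀, h₁⟩ | ⟨h₀, h₁⟩ <;> exact ⟨_, ‹_›⟩
  · exact Nat.not_even_iff_odd.mpr hi <|
      even_card_filter_of_iff_pair ((pairEquiv n).trans τ) (fun j => i j = 0) fun j => by
        simp only [Equiv.trans_apply, (hpair j).1]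

theorem stmt_11_general (n : ℕ) (i : Fin (2 * n) → Fin 2) (k : Fin (2 * n) → Fin (2 * n))
    (h : (Finset.univ : Finset (Fin (2 * n))).val.map k ≠ (Finset.univ : Finset (Fin (2 * n))).val ∨
      Odd ((Finset.univ : Finset (Fin (2 * n))).filter (fun j => i j = 0)).card) :
    Estar n (fun a => Emat n (i a) (k a)) = 0 := by
  have hterm := prod_Omst_Emat_eq_zero (h.imp (mt univ_val_map_eq_of_surjective) id)
  exact sum_eq_zero fun σ _ => mul_eq_zero_of_right _ <| mul_eq_zero_of_right _ <|
    sum_eq_zero fun τ _ => mul_eq_zero_of_right _ (hterm σ τ)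

theorem stmt_11 (n : ℕ) (hn : 1 ≤ n) (i : Fin (2 * n) → Fin 2) (k : Fin (2 * n) → Fin (2 * n))
    (h : (Finset.univ : Finset (Fin (2 * n))).val.map k ≠ (Finset.univ : Finset (Fin (2 * n))).val ∨
      Odd ((Finset.univ : Finset (Fin (2 * n))).filter (fun j => i j = 0)).card) :
    Estar n (fun a => Emat n (i a) (k a)) = 0 :=
  stmt_11_general n i k h
end

section
/- Let n ≥ 1 and let V be the real vector space of 4×(4n) real matrices. For any orthonormal vectors v₁, …, v_{4n} ∈ V (so that ξ = v₁ ∧ ⋯ ∧ v_{4n} is a decomposable unit 4n-vector), one has (Σ_{i=1}^{4} ξ_{i,i,…,i})² ≤ 1, where ξ_{i,…,i} is the Plücker coordinate with all row indices equal to i. -/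
/-!
Each diagonal coordinate `ξ_{i,…,i}` is the determinant of the `4n × 4n` block
`A_i = ((v_b)_{i,a})_{a,b}`. By AM–GM on the eigenvalues of `A_iᵀ A_i`,
`det A_i ^ 2 ≤ t_i ^ (4n)` where `t_i` is the mean square entry of `A_i`. Orthonormality of the
`v_b` makes the `t_i` sum to `1`, so each `t_i ≤ 1`, whence `|ξ_{i,…,i}| ≤ t_i` and
`|∑ ξ_{i,…,i}| ≤ ∑ t_i = 1`.
-/

/-- Plücker coordinate `ξ_{i₁,…,i_{4n}} := det M`, `M_{ab} = (v_b)_{i_a, a}`. -/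
noncomputable def xi (n : ℕ) (v : Fin (4 * n) → (Fin 4 → Fin (4 * n) → ℝ))
    (i : Fin (4 * n) → Fin 4) : ℝ :=
  Matrix.det (Matrix.of fun a b => v b (i a) a)

open Finset Matrix

theorem Real.prod_le_arith_mean_pow {ι : Type*} [Fintype ι] {z : ι → ℝ} (hz : ∀ i, 0 ≤ z i) :
    ∏ i, z i ≤ ((∑ i, z i) / Fintype.card ι) ^ Fintype.card ι := by
  set c := Fintype.card ι
  rcases Nat.eq_zero_or_pos c with hc | hc
  · simp [Finset.univ_eq_empty_iff.mpr (Fintype.card_eq_zero_iff.mp hc), hc]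
  have amgm := Real.geom_mean_le_arith_mean_weighted univ (fun _ => (c : ℝ)⁻¹) z
    (fun _ _ => by positivity) (by simp [c, hc.ne']) (fun i _ => hz i)
  calc ∏ i, z i = (∏ i, z i ^ (c⁻¹ : ℝ)) ^ c := by
        rw [← Finset.prod_pow]
        exact prod_congr rfl fun i _ => (Real.rpow_inv_natCast_pow (hz i) hc.ne').symm
    _ ≤ (∑ i, (c : ℝ)⁻¹ * z i) ^ c :=
        pow_le_pow_left₀ (prod_nonneg fun i _ => Real.rpow_nonneg (hz i) _) amgm c
    _ = ((∑ i, z i) / c) ^ c := by rw [← mul_sum, inv_mul_eq_div]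

theorem Matrix.PosSemidef.det_le_trace_div_card_pow {m : Type*} [Fintype m] [DecidableEq m]
    {M : Matrix m m ℝ} (hM : M.PosSemidef) :
    M.det ≤ (M.trace / Fintype.card m) ^ Fintype.card m := by
  have hdet : M.det = ∏ i, hM.isHermitian.eigenvalues i := by
    simpa using hM.isHermitian.det_eq_prod_eigenvalues
  have htr : M.trace = ∑ i, hM.isHermitian.eigenvalues i := by
    simpa using hM.isHermitian.trace_eq_sum_eigenvalues
  rw [hdet, htr]
  exact Real.prod_le_arith_mean_pow hM.eigenvalues_nonneg

theorem Matrix.det_sq_le_sum_sq_div_card_pow {m : Type*} [Fintype m] [DecidableEq m]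
    (A : Matrix m m ℝ) :
    A.det ^ 2 ≤ ((∑ i, ∑ j, A i j ^ 2) / Fintype.card m) ^ Fintype.card m := by
  have hgram := (posSemidef_conjTranspose_mul_self A).det_le_trace_div_card_pow
  have htr : (Aᴴ * A).trace = ∑ i, ∑ j, A i j ^ 2 := by
    simp only [trace, diag, mul_apply, conjTranspose_apply, star_trivial, ← sq]
    exact sum_comm
  rwa [det_mul, det_conjTranspose, star_trivial, ← sq, htr] at hgram

theorem Matrix.abs_det_le_sum_sq_div_card {m : Type*} [Fintype m] [DecidableEq m]
    (hm : 2 ≤ Fintype.card m) (A : Matrix m m ℝ)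
    (hA : (∑ i, ∑ j, A i j ^ 2) / Fintype.card m ≤ 1) :
    |A.det| ≤ (∑ i, ∑ j, A i j ^ 2) / Fintype.card m := by
  set t := (∑ i, ∑ j, A i j ^ 2) / Fintype.card m
  have ht : 0 ≤ t := by positivity
  rw [← abs_of_nonneg ht, ← sq_le_sq]
  calc A.det ^ 2 ≤ t ^ Fintype.card m := A.det_sq_le_sum_sq_div_card_pow
    _ ≤ t ^ 2 := pow_le_pow_of_le_one ht hA hm

theorem stmt_16 (n : ℕ) (hn : 1 ≤ n) (v : Fin (4 * n) → (Fin 4 → Fin (4 * n) → ℝ))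
    (hv : ∀ a b, (∑ i : Fin 4, ∑ k : Fin (4 * n), v a i k * v b i k) = if a = b then 1 else 0) :
    (∑ i : Fin 4, xi n v (fun _ => i)) ^ 2 ≤ 1 := by
  set A : Fin 4 → Matrix (Fin (4 * n)) (Fin (4 * n)) ℝ := fun i => of fun a b => v b i a
  set t : Fin 4 → ℝ := fun i => (∑ a, ∑ b, A i a b ^ 2) / (4 * n : ℕ)
  have ht_sum : ∑ i, t i = 1 := by
    have hnorm : ∑ i, ∑ a, ∑ b, A i a b ^ 2 = (4 * n : ℕ) := by
      simp only [A, of_apply, sq]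
      rw [sum_congr rfl fun i _ => sum_comm, sum_comm]
      simp [hv]
    rw [← sum_div, hnorm, div_self (by positivity)]
  have ht_le : ∀ i, t i ≤ 1 := fun i =>
    ht_sum ▸ single_le_sum (fun j _ => by positivity) (mem_univ i)
  have hcard : 2 ≤ Fintype.card (Fin (4 * n)) := by rw [Fintype.card_fin]; omega
  rw [sq_le_one_iff_abs_le_one]
  calc |∑ i, xi n v fun _ => i| ≤ ∑ i, |(A i).det| := abs_sum_le_sum_abs _ _
    _ ≤ ∑ i, t i := sum_le_sum fun i _ => by
        simpa only [Fintype.card_fin] using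
          abs_det_le_sum_sq_div_card hcard (A i) (by simpa only [Fintype.card_fin] using ht_le i)
    _ = 1 := ht_sum
end
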